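/- Fix R > 0. Let C ⊆ ℝ^d be a nonempty compact convex set such that ‖x − y‖₂ ≤ 2R for all x, y ∈ C. Then there exists z ∈ ℝ^d such that C is contained in the closed Euclidean ball of radius R·√2 centered at z. -/

import Mathlib

open MeasureTheory ProbabilityTheory
open scoped Classical

/-- The Gaussian measure `N(μ, I)` on `ℝ^d`, i.e. the product of `d` one-dimensional
Gaussians of variance `1` centered at the coordinates of `μ`. -/
noncomputable def gaussId (d : ℕ) (μ : EuclideanSpace ℝ (Fin d)) :
    Measure (EuclideanSpace ℝ (Fin d)) :=
  (Measure.pi fun i => gaussianReal (μ i) 1).map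
    (MeasurableEquiv.toLp 2 (Fin d → ℝ))

/-- The square root of a positive semidefinite matrix, as `Matrix.PosSemidef.sqrt` was defined
in the older Mathlib (via the spectral theorem). -/
noncomputable def posSemidefSqrt {n : Type*} [Fintype n] [DecidableEq n]
    {A : Matrix n n ℝ} (hA : A.PosSemidef) : Matrix n n ℝ :=
  hA.1.eigenvectorUnitary.1 * Matrix.diagonal ((RCLike.ofReal : ℝ → ℝ) ∘ (√·) ∘ hA.1.eigenvalues) *
    (star hA.1.eigenvectorUnitary : Matrix n n ℝ)

/-- The mean-zero Gaussian measure `N(0, Σ)` on `ℝ^d` with covariance matrix `Σ`: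
the pushforward of the standard Gaussian under `x ↦ Σ^{1/2} x`. -/
noncomputable def gaussCov (d : ℕ) {S : Matrix (Fin d) (Fin d) ℝ} (hS : S.PosSemidef) :
    Measure (EuclideanSpace ℝ (Fin d)) :=
  (gaussId d 0).map (fun x =>
    (EuclideanSpace.equiv (Fin d) ℝ).symm ((posSemidefSqrt hS).mulVec (EuclideanSpace.equiv (Fin d) ℝ x)))

/-- Total variation distance between two measures:
`sup` over measurable sets `A` of `|P(A) − Q(A)|`. -/
noncomputable def tvDist {Ω : Type*} [MeasurableSpace Ω] (P Q : Measure Ω) : ℝ :=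
  ⨆ A : {s : Set Ω // MeasurableSet s}, |(P A).toReal - (Q A).toReal|

/-- The cumulative distribution function of the standard one-dimensional Gaussian. -/
noncomputable def stdPhi (x : ℝ) : ℝ := (gaussianReal 0 1 (Set.Iic x)).toReal

/-- Frobenius norm of a matrix. -/
noncomputable def frob {d : ℕ} (A : Matrix (Fin d) (Fin d) ℝ) : ℝ :=
  Real.sqrt (∑ i, ∑ j, (A i j) ^ 2)

/-- The empirical mean of a finite set of points. -/
noncomputable def empMean {d : ℕ} (G : Finset (EuclideanSpace ℝ (Fin d))) :
    EuclideanSpace ℝ (Fin d) :=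
  (G.card : ℝ)⁻¹ • ∑ x ∈ G, x

/-- The expectation of `f` under the uniform distribution over the finite set `G`. -/
noncomputable def empExp {α : Type*} (G : Finset α) (f : α → ℝ) : ℝ :=
  (∑ x ∈ G, f x) / G.card

/-- The probability of the event `p` under the uniform distribution over `G`. -/
noncomputable def empProb {α : Type*} (G : Finset α) (p : α → Prop) : ℝ :=
  ((G.filter p).card : ℝ) / G.card

/-- `φ(S', G) = |G ∖ G'| / |S'|` where `G' = S' ∩ G`. -/
noncomputable def phiF {α : Type*} (S' G : Finset α) : ℝ := ((G \ S').card : ℝ) / S'.card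

/-- `ψ(S', G) = |E'| / |S'|` where `E' = S' ∩ E`. -/
noncomputable def psiF {α : Type*} (S' E : Finset α) : ℝ := ((S' ∩ E).card : ℝ) / S'.card

/-- `Δ(S', G) = ψ(S', G) + φ(S', G) log(1/φ(S', G))`. -/
noncomputable def deltaF {α : Type*} (S' G E : Finset α) : ℝ :=
  psiF S' E + phiF S' G * Real.log (1 / phiF S' G)

/-- The even degree-2 polynomial `x ↦ xᵀ A x + c`. -/
noncomputable def quadPoly {d : ℕ} (A : Matrix (Fin d) (Fin d) ℝ) (c : ℝ)
    (x : EuclideanSpace ℝ (Fin d)) : ℝ :=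
  (∑ i, ∑ j, A i j * x i * x j) + c

/-- The general even polynomial of degree at most 4,
`x ↦ ∑ T i j k l * xᵢxⱼxₖxₗ + xᵀ A x + c`. -/
noncomputable def quartPoly {d : ℕ} (T : Fin d → Fin d → Fin d → Fin d → ℝ)
    (A : Matrix (Fin d) (Fin d) ℝ) (c : ℝ) (x : EuclideanSpace ℝ (Fin d)) : ℝ :=
  (∑ i, ∑ j, ∑ k, ∑ l, T i j k l * x i * x j * x k * x l)
    + (∑ i, ∑ j, A i j * x i * x j) + c

/-- `(η, δ)`-goodness of a finite set `G` with respect to `N(μ, I)`, with universal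
constant `C₀` in the boundedness condition. -/
structure IsGood (d : ℕ) (η δ C₀ : ℝ) (μ : EuclideanSpace ℝ (Fin d))
    (G : Finset (EuclideanSpace ℝ (Fin d))) : Prop where
  bounded : ∀ x ∈ G, ‖x - μ‖ ^ 2 ≤ C₀ * d * Real.log (G.card / δ)
  affine : ∀ (w : EuclideanSpace ℝ (Fin d)) (b : ℝ),
    |empProb G (fun x => 0 ≤ (∑ i, w i * x i) + b)
      - ((gaussId d μ) {x | 0 ≤ (∑ i, w i * x i) + b}).toReal|
      ≤ η / (d * Real.log (d / (η * δ)))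
  meanClose : ‖empMean G - μ‖ ≤ η
  covClose : ∀ v : EuclideanSpace ℝ (Fin d), ‖v‖ = 1 →
    |empExp G (fun x => (∑ i, v i * (x i - empMean G i)) ^ 2) - 1| ≤ η / d
  polyMean : ∀ (A : Matrix (Fin d) (Fin d) ℝ) (c : ℝ),
    |empExp G (quadPoly A c) - ∫ x, quadPoly A c x ∂(gaussId d μ)|
      ≤ η * Real.sqrt (∫ x, (quadPoly A c x) ^ 2 ∂(gaussId d μ))
  polySq : ∀ (A : Matrix (Fin d) (Fin d) ℝ) (c : ℝ),
    |empExp G (fun x => (quadPoly A c x) ^ 2) - ∫ x, (quadPoly A c x) ^ 2 ∂(gaussId d μ)|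
      ≤ η * ∫ x, (quadPoly A c x) ^ 2 ∂(gaussId d μ)
  polyTail : ∀ (A : Matrix (Fin d) (Fin d) ℝ) (c : ℝ),
    empProb G (fun x => 0 ≤ quadPoly A c x)
      ≤ ((gaussId d μ) {x | 0 ≤ quadPoly A c x}).toReal + η / (d * Real.log (G.card / δ))

/-- `(η, δ)`-goodness of a finite set `G` with respect to `N(0, Σ)`, with universal
constant `C₀` in the boundedness condition. -/
structure IsGoodCov (d : ℕ) (η δ C₀ : ℝ) {S : Matrix (Fin d) (Fin d) ℝ} (hS : S.PosSemidef)
    (G : Finset (EuclideanSpace ℝ (Fin d))) : Prop where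
  bounded : ∀ x ∈ G, (∑ i, ∑ j, x i * S⁻¹ i j * x j) ≤ C₀ * d * Real.log (G.card / δ)
  deg2Mean : ∀ (A : Matrix (Fin d) (Fin d) ℝ) (c : ℝ),
    |empExp G (quadPoly A c) - ∫ x, quadPoly A c x ∂(gaussCov d hS)|
      ≤ η * Real.sqrt (∫ x, (quadPoly A c x) ^ 2 ∂(gaussCov d hS))
  deg2Sq : ∀ (A : Matrix (Fin d) (Fin d) ℝ) (c : ℝ),
    |empExp G (fun x => (quadPoly A c x) ^ 2) - ∫ x, (quadPoly A c x) ^ 2 ∂(gaussCov d hS)|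
      ≤ η * ∫ x, (quadPoly A c x) ^ 2 ∂(gaussCov d hS)
  deg2Tail : ∀ (A : Matrix (Fin d) (Fin d) ℝ) (c : ℝ),
    empProb G (fun x => 0 ≤ quadPoly A c x)
      ≤ ((gaussCov d hS) {x | 0 ≤ quadPoly A c x}).toReal
        + η ^ 2 / (d * Real.log (G.card / δ))
  deg4Mean : ∀ (T : Fin d → Fin d → Fin d → Fin d → ℝ) (A : Matrix (Fin d) (Fin d) ℝ) (c : ℝ),
    |empExp G (quartPoly T A c) - ∫ x, quartPoly T A c x ∂(gaussCov d hS)|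
      ≤ η * Real.sqrt (∫ x, (quartPoly T A c x
          - ∫ y, quartPoly T A c y ∂(gaussCov d hS)) ^ 2 ∂(gaussCov d hS))
  deg4Tail : ∀ (T : Fin d → Fin d → Fin d → Fin d → ℝ) (A : Matrix (Fin d) (Fin d) ℝ) (c : ℝ),
    empProb G (fun x => 0 ≤ quartPoly T A c x)
      ≤ ((gaussCov d hS) {x | 0 ≤ quartPoly T A c x}).toReal
        + η ^ 2 / (2 * Real.log (1 / η) * (d * Real.log (G.card / δ)) ^ 2)

/-- The trace norm (Schatten-1 norm) of a matrix: the trace of `(AᵀA)^{1/2}`. -/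
noncomputable def traceNorm {d : ℕ} (A : Matrix (Fin d) (Fin d) ℝ) : ℝ :=
  (posSemidefSqrt (Matrix.posSemidef_conjTranspose_mul_self A)).trace

set_option maxHeartbeats 1000000 in
open scoped RealInnerProductSpace in
/-- **Jung's theorem.** A nonempty compact convex set in `ℝ^d` of diameter at
most `2R` is contained in a closed ball of radius `R·√2`. -/
theorem jung_covering {d : ℕ} (R : ℝ) (hR : 0 < R) (C : Set (EuclideanSpace ℝ (Fin d)))
    (hne : C.Nonempty) (hcomp : IsCompact C) (hconv : Convex ℝ C)
    (hdiam : ∀ x ∈ C, ∀ y ∈ C, ‖x - y‖ ≤ 2 * R) :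
    ∃ z : EuclideanSpace ℝ (Fin d), C ⊆ Metric.closedBall z (R * Real.sqrt 2) := by
  classical
  obtain ⟨x₀, hx₀⟩ := hne
  have hne' : C.Nonempty := ⟨x₀, hx₀⟩
  set f : EuclideanSpace ℝ (Fin d) → ℝ := fun z => sSup ((dist z) '' C) with hf
  have hbdd : ∀ z : EuclideanSpace ℝ (Fin d), BddAbove ((dist z) '' C) := fun z =>
    (hcomp.image (continuous_const.dist continuous_id)).bddAbove
  have hle : ∀ z, ∀ x ∈ C, dist z x ≤ f z := fun z x hx => le_csSup (hbdd z) ⟨x, hx, rfl⟩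
  have hattain : ∀ z, ∃ x ∈ C, f z = dist z x := by
    intro z
    obtain ⟨x, hx, hmax⟩ := hcomp.exists_isMaxOn hne'
      ((continuous_const.dist continuous_id).continuousOn (s := C))
    refine ⟨x, hx, le_antisymm (csSup_le (hne'.image _) ?_) (hle z x hx)⟩
    rintro _ ⟨y, hy, rfl⟩; exact hmax hy
  have hlip : LipschitzWith 1 f := by
    have key2 : ∀ a b : EuclideanSpace ℝ (Fin d), f a - f b ≤ dist a b := by
      intro a b
      rw [sub_le_iff_le_add]
      apply csSup_le (hne'.image _)
      rintro _ ⟨x, hx, rfl⟩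
      calc dist a x ≤ dist a b + dist b x := dist_triangle a b x
        _ ≤ dist a b + f b := add_le_add le_rfl (hle b x hx)
    apply LipschitzWith.of_dist_le_mul
    intro z w
    simp only [NNReal.coe_one, one_mul]
    rw [Real.dist_eq, abs_sub_le_iff]
    have h2 := key2 w z
    rw [dist_comm w z] at h2
    exact ⟨key2 z w, h2⟩
  obtain ⟨z, hzK, hzmin⟩ := (isCompact_closedBall x₀ (2 * R)).exists_isMinOn
    ⟨x₀, Metric.mem_closedBall_self (by positivity)⟩ hlip.continuous.continuousOn
  set r := f z with hr
  have hfx₀ : f x₀ ≤ 2 * R := by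
    apply csSup_le (hne'.image _)
    rintro _ ⟨x, hx, rfl⟩
    rw [dist_eq_norm]; exact hdiam x₀ hx₀ x hx
  have hglobal : ∀ w, f z ≤ f w := by
    intro w
    by_cases hw : w ∈ Metric.closedBall x₀ (2 * R)
    · exact hzmin hw
    · have h1 : f z ≤ f x₀ := hzmin (Metric.mem_closedBall_self (by positivity))
      have h2 : 2 * R < dist w x₀ := by
        simpa [Metric.mem_closedBall, not_le] using hw
      exact h1.trans (hfx₀.trans (h2.le.trans (hle w x₀ hx₀)))
  have hrnn : 0 ≤ r := dist_nonneg.trans (hle z x₀ hx₀)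
  have key : r ^ 2 ≤ 2 * R ^ 2 := by
    by_contra hcon
    push_neg at hcon
    have hrpos : 0 < r := by nlinarith
    set F := C ∩ {x | dist z x = r} with hF
    have hFC : F ⊆ C := Set.inter_subset_left
    obtain ⟨xm, hxm, hxmax⟩ := hattain z
    have hFne : F.Nonempty := ⟨xm, hxm, hxmax.symm⟩
    -- Step A : z is in the closure of the convex hull of F
    have hzhull : z ∈ closure (convexHull ℝ F) := by
      by_contra hz
      obtain ⟨φ, u, hu1, hu2⟩ := geometric_hahn_banach_point_closed
        (convex_convexHull ℝ F).closure isClosed_closure hz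
      set v := (InnerProductSpace.toDual ℝ _).symm φ with hv
      have hvx : ∀ x, ⟪v, x⟫ = φ x := fun x => InnerProductSpace.toDual_symm_apply
      set δ := u - φ z with hδ
      have hδpos : 0 < δ := sub_pos.mpr hu1
      have hsep : ∀ x ∈ F, δ ≤ ⟪v, x - z⟫ := by
        intro x hx
        rw [inner_sub_right, hvx, hvx]
        have := hu2 x (subset_closure (subset_convexHull ℝ F hx))
        linarith
      have hvne : v ≠ 0 := by
        intro h
        obtain ⟨p, hp⟩ := hFne
        have := hsep p hp
        rw [h, inner_zero_left] at this
        linarith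
      have hnv : 0 < ‖v‖ := norm_pos_iff.mpr hvne
      set C₁ := C ∩ {x | ⟪v, x - z⟫ ≤ δ / 2} with hC₁
      have hC₁comp : IsCompact C₁ := hcomp.inter_right
        (isClosed_le (continuous_const.inner (continuous_id.sub continuous_const))
          continuous_const)
      obtain ⟨r₁, hr₁lt, hr₁⟩ : ∃ r₁, r₁ < r ∧ ∀ x ∈ C₁, dist z x ≤ r₁ := by
        rcases C₁.eq_empty_or_nonempty with h | h
        · exact ⟨0, hrpos, by simp [h]⟩
        · obtain ⟨x₁, hx₁, hmax⟩ := hC₁comp.exists_isMaxOn h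
            ((continuous_const.dist continuous_id).continuousOn (s := C₁))
          refine ⟨dist z x₁, ?_, fun x hx => hmax hx⟩
          rcases (hle z x₁ hx₁.1).lt_or_eq with h' | h'
          · exact h'
          · exfalso
            have h1 := hsep x₁ ⟨hx₁.1, h'⟩
            have h2 := hx₁.2
            simp only [Set.mem_setOf_eq] at h2
            linarith
      set t := min (δ / (2 * ‖v‖ ^ 2)) ((r - r₁) / (2 * ‖v‖)) with ht
      have htpos : 0 < t := lt_min (by positivity) (by
        apply div_pos (by linarith) (by positivity))
      set z' := z + t • v with hz'
      have hlt : ∀ x ∈ C, dist z' x < r := by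
        intro x hx
        by_cases hxc : ⟪v, x - z⟫ ≤ δ / 2
        · have h1 : dist z' x ≤ dist z' z + dist z x := dist_triangle _ _ _
          have h2 : dist z' z = t * ‖v‖ := by
            rw [dist_eq_norm]
            simp [hz', norm_smul, abs_of_pos htpos]
          have h3 : dist z x ≤ r₁ := hr₁ x ⟨hx, hxc⟩
          have h4 : t * ‖v‖ ≤ (r - r₁) / 2 := by
            have := min_le_right (δ / (2 * ‖v‖ ^ 2)) ((r - r₁) / (2 * ‖v‖))
            calc t * ‖v‖ ≤ (r - r₁) / (2 * ‖v‖) * ‖v‖ := by gcongr <;> exact this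
              _ = (r - r₁) / 2 := by field_simp; try ring
          linarith
        · push_neg at hxc
          have hxr : ‖x - z‖ ≤ r := by
            rw [← dist_eq_norm, dist_comm]; exact hle z x hx
          have hsq : dist z' x ^ 2 < r ^ 2 := by
            have hexp : dist z' x ^ 2 = ‖x - z‖ ^ 2 - 2 * (t * ⟪v, x - z⟫) + t ^ 2 * ‖v‖ ^ 2 := by
              rw [dist_eq_norm, hz']
              have : z + t • v - x = -((x - z) - t • v) := by abel
              rw [this, norm_neg, norm_sub_sq_real, real_inner_smul_right, real_inner_comm,
                norm_smul, mul_pow]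
              simp [abs_of_pos htpos]
              try ring
            have h5 : t * ‖v‖ ^ 2 ≤ δ / 2 := by
              have := min_le_left (δ / (2 * ‖v‖ ^ 2)) ((r - r₁) / (2 * ‖v‖))
              calc t * ‖v‖ ^ 2 ≤ δ / (2 * ‖v‖ ^ 2) * ‖v‖ ^ 2 := by gcongr <;> exact this
                _ = δ / 2 := by field_simp; try ring
            have h6 : ‖x - z‖ ^ 2 ≤ r ^ 2 := by
              have := norm_nonneg (x - z)
              nlinarith
            have h7 : t ^ 2 * ‖v‖ ^ 2 = t * (t * ‖v‖ ^ 2) := by ring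
            nlinarith
          exact lt_of_pow_lt_pow_left₀ 2 hrpos.le hsq
      obtain ⟨x₂, hx₂, heq⟩ := hattain z'
      have := hglobal z'
      rw [heq] at this
      exact absurd (hlt x₂ hx₂) (not_lt.mpr this)
    -- Step B : derive 2 r² ≤ 4 R² + 2 ε r for every ε > 0
    obtain ⟨p, hpF⟩ := hFne
    have hfinal : ∀ ε > (0:ℝ), 2 * r ^ 2 ≤ 4 * R ^ 2 + 2 * ε * r := by
      intro ε hε
      obtain ⟨q, hq, hqd⟩ := Metric.mem_closure_iff.mp hzhull ε hε
      rw [convexHull_eq] at hq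
      obtain ⟨ι, s, w, g, hw0, hw1, hgs, hqc⟩ := hq
      have hcm : (∑ i ∈ s, w i • g i) = q := by
        rw [← Finset.centerMass_eq_of_sum_1 s g hw1]; exact hqc
      have hid : ∀ i ∈ s, ‖g i - p‖ ^ 2 = 2 * r ^ 2 - 2 * ⟪g i - z, p - z⟫ := by
        intro i hi
        have h1 : g i - p = (g i - z) - (p - z) := by abel
        rw [h1, norm_sub_sq_real]
        have h2 : ‖g i - z‖ = r := by
          rw [← dist_eq_norm, dist_comm]; exact (hgs i hi).2
        have h3 : ‖p - z‖ = r := by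
          rw [← dist_eq_norm, dist_comm]; exact hpF.2
        rw [h2, h3]; ring
      have hsum : ∑ i ∈ s, w i * ‖g i - p‖ ^ 2
          = 2 * r ^ 2 - 2 * ⟪q - z, p - z⟫ := by
        calc ∑ i ∈ s, w i * ‖g i - p‖ ^ 2
            = ∑ i ∈ s, w i * (2 * r ^ 2 - 2 * ⟪g i - z, p - z⟫) :=
              Finset.sum_congr rfl fun i hi => by rw [hid i hi]
          _ = (∑ i ∈ s, w i) * (2 * r ^ 2) - 2 * ∑ i ∈ s, w i * ⟪g i - z, p - z⟫ := by
              rw [Finset.sum_mul, Finset.mul_sum, ← Finset.sum_sub_distrib]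
              exact Finset.sum_congr rfl fun i _ => by ring
          _ = 2 * r ^ 2 - 2 * ⟪q - z, p - z⟫ := by
              rw [hw1, one_mul]
              have hsub : (∑ i ∈ s, w i • g i) - z = ∑ i ∈ s, w i • (g i - z) := by
                have h9 : ∑ i ∈ s, w i • (g i - z)
                    = (∑ i ∈ s, w i • g i) - (∑ i ∈ s, w i) • z := by
                  rw [Finset.sum_smul, ← Finset.sum_sub_distrib]
                  exact Finset.sum_congr rfl fun i _ => smul_sub _ _ _
                rw [h9, hw1, one_smul]
              congr 2
              rw [← hcm, hsub, sum_inner]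
              exact Finset.sum_congr rfl fun i _ => (real_inner_smul_left _ _ _).symm
      have hbound : ∑ i ∈ s, w i * ‖g i - p‖ ^ 2 ≤ 4 * R ^ 2 := by
        calc ∑ i ∈ s, w i * ‖g i - p‖ ^ 2 ≤ ∑ i ∈ s, w i * (2 * R) ^ 2 := by
              apply Finset.sum_le_sum
              intro i hi
              have h2R : ‖g i - p‖ ≤ 2 * R := hdiam _ (hFC (hgs i hi)) _ (hFC hpF)
              have hnn := norm_nonneg (g i - p)
              have hsq : ‖g i - p‖ ^ 2 ≤ (2 * R) ^ 2 := by nlinarith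
              exact mul_le_mul_of_nonneg_left hsq (hw0 i hi)
          _ = 4 * R ^ 2 := by rw [← Finset.sum_mul, hw1]; ring
      have hip : ⟪q - z, p - z⟫ ≤ ε * r := by
        calc ⟪q - z, p - z⟫ ≤ ‖q - z‖ * ‖p - z‖ := real_inner_le_norm _ _
          _ ≤ ε * r := by
              apply mul_le_mul
              · rw [← dist_eq_norm, dist_comm]; exact hqd.le
              · rw [← dist_eq_norm, dist_comm]; exact hpF.2.le
              · exact norm_nonneg _
              · linarith
      linarith [hsum ▸ hbound]
    have hε : 0 < (2 * r ^ 2 - 4 * R ^ 2) / (4 * r) := by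
      apply div_pos (by nlinarith) (by positivity)
    have := hfinal _ hε
    have h4 : 2 * ((2 * r ^ 2 - 4 * R ^ 2) / (4 * r)) * r = (2 * r ^ 2 - 4 * R ^ 2) / 2 := by
      field_simp; ring
    rw [h4] at this
    nlinarith
  refine ⟨z, fun x hx => ?_⟩
  rw [Metric.mem_closedBall, dist_comm]
  have h1 : dist z x ≤ r := hle z x hx
  have h2 : r ≤ R * Real.sqrt 2 := by
    have hs : (R * Real.sqrt 2) ^ 2 = 2 * R ^ 2 := by
      rw [mul_pow, Real.sq_sqrt (by norm_num : (2:ℝ) ≥ 0)]; ring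
    nlinarith [Real.sqrt_nonneg 2, key, hrnn, mul_nonneg hR.le (Real.sqrt_nonneg 2)]
  linarith
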